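/- Every map of graphs φ : G → G' factors as φ = ι ∘ ψ where ψ : G → G'' is surjective on vertices and edges and ι : G'' → G' is injective on vertices and edges; moreover if φ is a graph fibration then so is ι, and correspondingly P φ = Pψ ∘ Pι, exhibiting P φ as a submersion followed by an embedding when a compatible phase function is chosen. -/

import Mathlib

/-- A finite directed multigraph. -/
structure FinMultigraph where
  V : Type
  E : Type
  [fV : Fintype V]
  [fE : Fintype E]
  [dV : DecidableEq V]
  [dE : DecidableEq E]
  s : E → V
  t : E → V

attribute [instance] FinMultigraph.fV FinMultigraph.fE FinMultigraph.dV FinMultigraph.dE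

/-- A map of directed graphs. -/
@[ext]
structure GraphHom (G G' : FinMultigraph) where
  vmap : G.V → G'.V
  emap : G.E → G'.E
  src : ∀ e, vmap (G.s e) = G'.s (emap e)
  tgt : ∀ e, vmap (G.t e) = G'.t (emap e)

/-- Identity graph map. -/
def GraphHom.id (G : FinMultigraph) : GraphHom G G :=
  ⟨fun a => a, fun e => e, fun _ => rfl, fun _ => rfl⟩

/-- Composition of graph maps. -/
def GraphHom.comp {G G' G'' : FinMultigraph} (ψ : GraphHom G' G'') (φ : GraphHom G G') :
    GraphHom G G'' :=
  ⟨fun a => ψ.vmap (φ.vmap a), fun e => ψ.emap (φ.emap e),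
   fun e => (congrArg ψ.vmap (φ.src e)).trans (ψ.src _),
   fun e => (congrArg ψ.vmap (φ.tgt e)).trans (ψ.tgt _)⟩

/-- The map on total phase spaces induced by a graph map (`ℙφ`),
given a phase space function `P'` on the codomain graph; the phase space
function on the domain is `P' ∘ φ.vmap`. -/
def Pmap {G G' : FinMultigraph} (P' : G'.V → Type _) (φ : GraphHom G G') :
    (∀ a' : G'.V, P' a') → ∀ a : G.V, P' (φ.vmap a) :=
  fun x a => x (φ.vmap a)

/-- The input tree `I(a)` of a vertex `a`: vertices are `a` (the `Sum.inl` vertex)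
together with the edges of `G` targeting `a`; edges are the pairs `(a, γ)` with
`t γ = a`, going from `γ` to `a`. -/
@[reducible] def FinMultigraph.inputTree (G : FinMultigraph) (a : G.V) : FinMultigraph where
  V := Unit ⊕ {e : G.E // G.t e = a}
  E := {e : G.E // G.t e = a}
  s := fun e => Sum.inr e
  t := fun _ => Sum.inl ()

/-- The canonical graph map `ξ_a : I(a) → G`. -/
def FinMultigraph.xi (G : FinMultigraph) (a : G.V) : GraphHom (G.inputTree a) G where
  vmap := fun v => match v with
    | Sum.inl _ => a
    | Sum.inr e => G.s e.1
  emap := fun e => e.1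
  src := fun _ => rfl
  tgt := fun e => e.2.symm

/-- The graph with a single vertex and no edges. -/
def singleGraph : FinMultigraph where
  V := Unit
  E := Empty
  s := Empty.elim
  t := Empty.elim

/-- The inclusion `ι_a : {a} → G`. -/
def FinMultigraph.iota (G : FinMultigraph) (a : G.V) : GraphHom singleGraph G :=
  ⟨fun _ => a, Empty.elim, fun e => e.elim, fun e => e.elim⟩

/-- The inclusion `j_a : {a} → I(a)`. -/
def FinMultigraph.jmap (G : FinMultigraph) (a : G.V) : GraphHom singleGraph (G.inputTree a) :=
  ⟨fun _ => Sum.inl (), Empty.elim, fun e => e.elim, fun e => e.elim⟩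

/-- The induced map of input trees `φ_a : I(a) → I(φ(a))`. -/
def GraphHom.inputHom {G G' : FinMultigraph} (φ : GraphHom G G') (a : G.V) :
    GraphHom (G.inputTree a) (G'.inputTree (φ.vmap a)) where
  vmap := fun v => match v with
    | Sum.inl _ => Sum.inl ()
    | Sum.inr e => Sum.inr ⟨φ.emap e.1, by rw [← φ.tgt, e.2]⟩
  emap := fun e => ⟨φ.emap e.1, by rw [← φ.tgt, e.2]⟩
  src := fun _ => rfl
  tgt := fun _ => rfl

/-- A graph fibration: for every vertex `a` of `G` and every edge `e'` of `G'`
ending at `φ(a)` there is a unique edge `e` of `G` ending at `a` with `φ(e) = e'`. -/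
def IsFibration {G G' : FinMultigraph} (φ : GraphHom G G') : Prop :=
  ∀ (a : G.V) (e' : G'.E), G'.t e' = φ.vmap a →
    ∃! e : G.E, G.t e = a ∧ φ.emap e = e'

namespace GraphHom

variable {G G' : FinMultigraph}

def image (φ : GraphHom G G') : FinMultigraph where
  V := Set.range φ.vmap
  E := Set.range φ.emap
  s e := ⟨G'.s e.1, e.2.elim fun g hg => ⟨G.s g, hg ▸ φ.src g⟩⟩
  t e := ⟨G'.t e.1, e.2.elim fun g hg => ⟨G.t g, hg ▸ φ.tgt g⟩⟩

def toImage (φ : GraphHom G G') : GraphHom G φ.image :=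
  ⟨fun a => ⟨φ.vmap a, a, rfl⟩, fun e => ⟨φ.emap e, e, rfl⟩,
   fun e => Subtype.ext (φ.src e), fun e => Subtype.ext (φ.tgt e)⟩

def imageIncl (φ : GraphHom G G') : GraphHom φ.image G' :=
  ⟨Subtype.val, Subtype.val, fun _ => rfl, fun _ => rfl⟩

theorem toImage_vmap_surjective (φ : GraphHom G G') : Function.Surjective φ.toImage.vmap := by
  rintro ⟨_, a, rfl⟩
  exact ⟨a, rfl⟩

theorem toImage_emap_surjective (φ : GraphHom G G') : Function.Surjective φ.toImage.emap := by
  rintro ⟨_, e, rfl⟩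
  exact ⟨e, rfl⟩

theorem imageIncl_vmap_injective (φ : GraphHom G G') : Function.Injective φ.imageIncl.vmap :=
  Subtype.val_injective

theorem imageIncl_emap_injective (φ : GraphHom G G') : Function.Injective φ.imageIncl.emap :=
  Subtype.val_injective

theorem imageIncl_comp_toImage (φ : GraphHom G G') : φ.imageIncl.comp φ.toImage = φ :=
  rfl

end GraphHom

theorem Pmap_comp {G G' G'' : FinMultigraph} (P'' : G''.V → Type _) (ι : GraphHom G' G'')
    (ψ : GraphHom G G') (x : ∀ a'' : G''.V, P'' a'') :
    Pmap P'' (ι.comp ψ) x = Pmap (fun b => P'' (ι.vmap b)) ψ (Pmap P'' ι x) :=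
  rfl

theorem IsFibration.imageIncl {G G' : FinMultigraph} {φ : GraphHom G G'} (hφ : IsFibration φ) :
    IsFibration φ.imageIncl := by
  rintro ⟨_, a, rfl⟩ e' he'
  obtain ⟨e, ⟨-, hφe⟩, -⟩ := hφ a e' he'
  exact ⟨⟨e', e, hφe⟩, ⟨Subtype.ext he', rfl⟩, fun _ ⟨_, hf⟩ => φ.imageIncl_emap_injective hf⟩

/-- Every map of graphs `φ : G → G'` factors as `φ = ι ∘ ψ` where `ψ` is
surjective on vertices and edges and `ι` is injective on vertices and edges; if `φ` is a
graph fibration then so is `ι`; and correspondingly `ℙφ = ℙψ ∘ ℙι` for any phase space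
function `P'` on `G'`, exhibiting `ℙφ` as a submersion followed by an embedding. -/
theorem graph_map_factorization {G G' : FinMultigraph} (φ : GraphHom G G') :
    ∃ (G'' : FinMultigraph) (ψ : GraphHom G G'') (ι : GraphHom G'' G'),
      Function.Surjective ψ.vmap ∧ Function.Surjective ψ.emap ∧
      Function.Injective ι.vmap ∧ Function.Injective ι.emap ∧
      ι.comp ψ = φ ∧
      (IsFibration φ → IsFibration ι) ∧
      ∀ (P' : G'.V → Type) (x : ∀ a' : G'.V, P' a') (a : G.V),
        HEq (Pmap P' φ x a) (Pmap (fun b => P' (ι.vmap b)) ψ (Pmap P' ι x) a) :=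
  ⟨φ.image, φ.toImage, φ.imageIncl,
    φ.toImage_vmap_surjective, φ.toImage_emap_surjective,
    φ.imageIncl_vmap_injective, φ.imageIncl_emap_injective,
    φ.imageIncl_comp_toImage,
    IsFibration.imageIncl,
    fun P' x a => (congrFun (Pmap_comp P' φ.imageIncl φ.toImage x) a).heq⟩
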